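/- arXiv:2411.08871 — 3 statements merged into one kernel-verified Lean document; each statement's English description precedes it below -/
import Mathlib

section
/- Let 0<δ<ρ<1 and let E ⊆ ℝⁿ be a Katz–Tao (δ,s,C)-set with 1 ≤ C ≤ δ^{-ε} for every ε>0 (up to constants). Then there exists a subset E' ⊆ E such that ρ^s·#E' ≳ δ^s·#E (up to δ^{-ε} losses) and E' is a Katz–Tao (ρ,s,C')-set for some absolute constant C'. -/
open Metric Set
open scoped Classical

noncomputable section

/-- `E` is a Katz–Tao `(δ,s,C)`-set: every `r`-ball with `r ∈ [δ,1]` contains at most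
`C (r/δ)^s` points of `E`. -/
def KatzTaoSet {n : ℕ} (δ s C : ℝ) (E : Finset (EuclideanSpace ℝ (Fin n))) : Prop :=
  ∀ (x : EuclideanSpace ℝ (Fin n)) (r : ℝ), r ∈ Set.Icc δ 1 →
    ((E.filter fun p => p ∈ closedBall x r).card : ℝ) ≤ C * (r / δ) ^ s

/-- A finite set of centers whose unit balls cover the ball of radius 5. -/
lemma exists_cover5 (n : ℕ) : ∃ T : Finset (EuclideanSpace ℝ (Fin n)),
    ∀ y : EuclideanSpace ℝ (Fin n), y ∈ closedBall (0 : EuclideanSpace ℝ (Fin n)) 5 →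
      ∃ c ∈ T, dist y c < 1 := by
  obtain ⟨T, hT⟩ := (isCompact_closedBall (0 : EuclideanSpace ℝ (Fin n)) 5).elim_finite_subcover
    (fun c : EuclideanSpace ℝ (Fin n) => ball c 1) (fun _ => isOpen_ball)
    (fun y _ => mem_iUnion.2 ⟨y, mem_ball_self one_pos⟩)
  refine ⟨T, fun y hy => ?_⟩
  have := hT hy
  simp only [mem_iUnion, mem_ball, exists_prop] at this
  exact this

/-- Counting points of a Katz–Tao set in a `5r`-ball, via the covering. -/
lemma count5 {n : ℕ} {δ s C : ℝ} {E : Finset (EuclideanSpace ℝ (Fin n))}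
    (hs : 0 < s) (hδ : 0 < δ)
    (hE : KatzTaoSet δ s C E) (T : Finset (EuclideanSpace ℝ (Fin n)))
    (hT : ∀ y : EuclideanSpace ℝ (Fin n), y ∈ closedBall (0 : EuclideanSpace ℝ (Fin n)) 5 →
      ∃ c ∈ T, dist y c < 1)
    (x : EuclideanSpace ℝ (Fin n)) {r : ℝ} (hr : r ∈ Set.Icc δ 1) :
    ((E.filter fun p => p ∈ closedBall x (5 * r)).card : ℝ) ≤
      (T.card : ℝ) * (C * (r / δ) ^ s) := by
  have hrpos : 0 < r := lt_of_lt_of_le hδ hr.1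
  have hsub : (E.filter fun p => p ∈ closedBall x (5 * r)) ⊆
      T.biUnion (fun c => E.filter fun p => p ∈ closedBall (x + r • c) r) := by
    intro p hp
    rw [Finset.mem_filter] at hp
    obtain ⟨hpE, hpd⟩ := hp
    rw [mem_closedBall] at hpd
    set q : EuclideanSpace ℝ (Fin n) := r⁻¹ • (p - x) with hq
    have hqmem : q ∈ closedBall (0 : EuclideanSpace ℝ (Fin n)) 5 := by
      rw [mem_closedBall, dist_zero_right, hq, norm_smul, Real.norm_eq_abs,
        abs_of_pos (inv_pos.2 hrpos)]
      rw [dist_eq_norm] at hpd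
      rw [inv_mul_le_iff₀ hrpos]
      linarith [hpd]
    obtain ⟨c, hcT, hc⟩ := hT q hqmem
    refine Finset.mem_biUnion.2 ⟨c, hcT, Finset.mem_filter.2 ⟨hpE, ?_⟩⟩
    rw [mem_closedBall]
    have hpx : p - x = r • q := by
      rw [hq, smul_smul, mul_inv_cancel₀ hrpos.ne', one_smul]
    have : dist p (x + r • c) = r * dist q c := by
      rw [dist_eq_norm, dist_eq_norm]
      have : p - (x + r • c) = r • (q - c) := by
        rw [smul_sub, ← hpx]; abel
      rw [this, norm_smul, Real.norm_eq_abs, abs_of_pos hrpos]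
    rw [this]
    nlinarith [hc, hrpos]
  calc ((E.filter fun p => p ∈ closedBall x (5 * r)).card : ℝ)
      ≤ ((T.biUnion (fun c => E.filter fun p => p ∈ closedBall (x + r • c) r)).card : ℝ) := by
        exact_mod_cast Finset.card_le_card hsub
    _ ≤ (∑ c ∈ T, (E.filter fun p => p ∈ closedBall (x + r • c) r).card : ℕ) := by
        exact_mod_cast Finset.card_biUnion_le
    _ = ∑ c ∈ T, ((E.filter fun p => p ∈ closedBall (x + r • c) r).card : ℝ) := by
        push_cast; ring
    _ ≤ ∑ _c ∈ T, (C * (r / δ) ^ s) :=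
        Finset.sum_le_sum (fun c _ => hE (x + r • c) r hr)
    _ = (T.card : ℝ) * (C * (r / δ) ^ s) := by
        rw [Finset.sum_const, nsmul_eq_mul]

/-- A Katz–Tao `(δ,s,C)`-set with `C ⪅ 1` contains a subset `E'` with
`ρ^s #E' ⪆ δ^s #E` which is a Katz–Tao `(ρ,s,C')`-set for an absolute constant `C'`. -/
theorem stmt1 (n : ℕ) (s : ℝ) (hs : 0 < s) (hsn : s ≤ (n:ℝ)) :
    ∃ C' ≥ (1:ℝ), ∀ ε > (0:ℝ), ∃ c > (0:ℝ),
      ∀ (δ ρ C : ℝ) (E : Finset (EuclideanSpace ℝ (Fin n))),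
        0 < δ → δ < ρ → ρ < 1 → 1 ≤ C → C ≤ δ ^ (-ε) →
        KatzTaoSet δ s C E →
        ∃ E' ⊆ E, c * δ ^ ε * (δ ^ s * (E.card : ℝ)) ≤ ρ ^ s * (E'.card : ℝ) ∧
          KatzTaoSet ρ s C' E' := by
  obtain ⟨T, hT⟩ := exists_cover5 n
  set N : ℝ := (T.card : ℝ) + 1 with hN
  have hNpos : 0 < N := by positivity
  refine ⟨1, le_refl _, fun ε hε => ⟨1 / (3 * N), by positivity,
    fun δ ρ C E hδ hδρ hρ hC hCδ hKT => ?_⟩⟩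
  have hρpos : 0 < ρ := lt_trans hδ hδρ
  -- the trivial Katz-Tao set property for the empty set
  have h0 : (∅ : Finset (EuclideanSpace ℝ (Fin n))) ∈
      (E.powerset).filter (fun A => KatzTaoSet ρ s 1 A) := by
    refine Finset.mem_filter.2 ⟨Finset.mem_powerset.2 (Finset.empty_subset _), ?_⟩
    intro x r hr
    simp only [Finset.filter_empty, Finset.card_empty, Nat.cast_zero, one_mul]
    exact Real.rpow_nonneg (div_nonneg (le_trans hρpos.le hr.1) hρpos.le) s
  obtain ⟨E', hE'mem, hmax⟩ := Finset.exists_max_image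
    ((E.powerset).filter (fun A => KatzTaoSet ρ s 1 A)) Finset.card ⟨∅, h0⟩
  rw [Finset.mem_filter, Finset.mem_powerset] at hE'mem
  obtain ⟨hE'sub, hE'KT⟩ := hE'mem
  refine ⟨E', hE'sub, ?_, hE'KT⟩
  -- every point outside E' sits in a "saturated" ball
  have key : ∀ a ∈ E \ E', ∃ x : EuclideanSpace ℝ (Fin n), ∃ r : ℝ, r ∈ Set.Icc ρ 1 ∧
      a ∈ closedBall x r ∧
      (r / ρ) ^ s ≤ 2 * ((E'.filter fun p => p ∈ closedBall x r).card : ℝ) := by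
    intro a ha
    rw [Finset.mem_sdiff] at ha
    obtain ⟨haE, haE'⟩ := ha
    have hnot : ¬ KatzTaoSet ρ s 1 (insert a E') := by
      intro hKT'
      have hins : insert a E' ∈ (E.powerset).filter (fun A => KatzTaoSet ρ s 1 A) :=
        Finset.mem_filter.2 ⟨Finset.mem_powerset.2 (Finset.insert_subset haE hE'sub), hKT'⟩
      have := hmax _ hins
      rw [Finset.card_insert_of_notMem haE'] at this
      omega
    rw [KatzTaoSet] at hnot
    push_neg at hnot
    obtain ⟨x, r, hrIcc, hlt⟩ := hnot
    have haB : a ∈ closedBall x r := by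
      by_contra hab
      rw [Finset.filter_insert, if_neg hab] at hlt
      exact absurd (hE'KT x r hrIcc) (not_le.2 hlt)
    refine ⟨x, r, hrIcc, haB, ?_⟩
    rw [Finset.filter_insert, if_pos haB,
      Finset.card_insert_of_notMem (fun h => haE' (Finset.mem_filter.1 h).1)] at hlt
    set m := (E'.filter fun p => p ∈ closedBall x r).card with hm
    have h1 : (1 : ℝ) ≤ (r / ρ) ^ s :=
      Real.one_le_rpow ((le_div_iff₀ hρpos).2 (by linarith [hrIcc.1])) hs.le
    have hm1 : 1 ≤ m := by
      by_contra hm0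
      push_neg at hm0
      interval_cases m
      · push_cast at hlt; linarith
    push_cast at hlt
    have : (1 : ℝ) ≤ (m : ℝ) := by exact_mod_cast hm1
    linarith
  choose! xc rc hIcc hmemB hcard using key
  -- Vitali covering
  obtain ⟨u, hu_sub, hu_disj, hu_cov⟩ :=
    Vitali.exists_disjoint_subfamily_covering_enlargement_closedBall
      (↑(E \ E') : Set (EuclideanSpace ℝ (Fin n))) xc rc 1
      (fun a ha => (hIcc a (Finset.mem_coe.1 ha)).2) 5 (by norm_num)
  have hufin : u.Finite := (E \ E').finite_toSet.subset hu_sub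
  set U : Finset (EuclideanSpace ℝ (Fin n)) := hufin.toFinset with hU
  have hUmem : ∀ b, b ∈ U ↔ b ∈ u := fun b => hufin.mem_toFinset
  have hUE : ∀ b ∈ U, b ∈ E \ E' := fun b hb => Finset.mem_coe.1 (hu_sub ((hUmem b).1 hb))
  -- (4) the saturated balls are disjoint, so the counts sum to at most #E'
  have hsum4 : ∑ b ∈ U, ((E'.filter fun p => p ∈ closedBall (xc b) (rc b)).card) ≤ E'.card := by
    have hdisjF : ∀ b ∈ U, ∀ b' ∈ U, b ≠ b' →
        Disjoint (E'.filter fun p => p ∈ closedBall (xc b) (rc b))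
          (E'.filter fun p => p ∈ closedBall (xc b') (rc b')) := by
      intro b hb b' hb' hne
      have hd := hu_disj ((hUmem b).1 hb) ((hUmem b').1 hb') hne
      rw [Finset.disjoint_left]
      intro p hp hp'
      exact Set.disjoint_left.1 hd (Finset.mem_filter.1 hp).2 (Finset.mem_filter.1 hp').2
    rw [← Finset.card_biUnion hdisjF]
    exact Finset.card_le_card (Finset.biUnion_subset.2
      (fun b _ => Finset.filter_subset _ _))
  -- (1) E \ E' is covered by the enlarged balls
  have hcov1 : E \ E' ⊆ U.biUnion (fun b => E.filter fun p => p ∈ closedBall (xc b) (5 * rc b)) := by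
    intro a ha
    obtain ⟨b, hbu, hball⟩ := hu_cov a (Finset.mem_coe.2 ha)
    exact Finset.mem_biUnion.2 ⟨b, (hUmem b).2 hbu,
      Finset.mem_filter.2 ⟨(Finset.mem_sdiff.1 ha).1, hball (hmemB a ha)⟩⟩
  -- per-ball count
  have hQ1 : (1:ℝ) ≤ (ρ / δ) ^ s :=
    Real.one_le_rpow ((le_div_iff₀ hδ).2 (by linarith)) hs.le
  have hQ0 : (0:ℝ) ≤ (ρ / δ) ^ s := Real.rpow_nonneg (div_nonneg hρpos.le hδ.le) s
  have hC0 : (0:ℝ) ≤ C := by linarith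
  have hN1 : (1:ℝ) ≤ N := by
    have : (0:ℝ) ≤ (T.card : ℝ) := Nat.cast_nonneg _
    rw [hN]; linarith
  have hper : ∀ b ∈ U, ((E.filter fun p => p ∈ closedBall (xc b) (5 * rc b)).card : ℝ) ≤
      2 * N * C * (ρ / δ) ^ s * ((E'.filter fun p => p ∈ closedBall (xc b) (rc b)).card : ℝ) := by
    intro b hb
    have hbE := hUE b hb
    have hrIcc := hIcc b hbE
    have hrδ : rc b ∈ Set.Icc δ 1 := ⟨le_trans hδρ.le hrIcc.1, hrIcc.2⟩
    have h1 := count5 hs hδ hKT T hT (xc b) hrδ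
    have hrb0 : 0 < rc b := lt_of_lt_of_le hρpos hrIcc.1
    have hsplit : (rc b / δ) ^ s = (ρ / δ) ^ s * (rc b / ρ) ^ s := by
      rw [← Real.mul_rpow (div_nonneg hρpos.le hδ.le) (div_nonneg hrb0.le hρpos.le)]
      congr 1
      field_simp
    have h2 := hcard b hbE
    have hTN : (T.card : ℝ) ≤ N := by rw [hN]; linarith
    calc ((E.filter fun p => p ∈ closedBall (xc b) (5 * rc b)).card : ℝ)
        ≤ (T.card : ℝ) * (C * (rc b / δ) ^ s) := h1
      _ = (T.card : ℝ) * C * (ρ / δ) ^ s * ((rc b / ρ) ^ s) := by rw [hsplit]; ring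
      _ ≤ (T.card : ℝ) * C * (ρ / δ) ^ s *
            (2 * ((E'.filter fun p => p ∈ closedBall (xc b) (rc b)).card : ℝ)) := by
          exact mul_le_mul_of_nonneg_left h2
            (mul_nonneg (mul_nonneg (Nat.cast_nonneg _) hC0) hQ0)
      _ ≤ 2 * N * C * (ρ / δ) ^ s *
            ((E'.filter fun p => p ∈ closedBall (xc b) (rc b)).card : ℝ) := by
          have hc0 : (0:ℝ) ≤ 2 * ((E'.filter fun p => p ∈ closedBall (xc b) (rc b)).card : ℝ) := by
            positivity
          calc (T.card : ℝ) * C * (ρ / δ) ^ s *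
                (2 * ((E'.filter fun p => p ∈ closedBall (xc b) (rc b)).card : ℝ))
              ≤ N * C * (ρ / δ) ^ s *
                (2 * ((E'.filter fun p => p ∈ closedBall (xc b) (rc b)).card : ℝ)) :=
                mul_le_mul_of_nonneg_right
                  (mul_le_mul_of_nonneg_right (mul_le_mul_of_nonneg_right hTN hC0) hQ0) hc0
            _ = 2 * N * C * (ρ / δ) ^ s *
                ((E'.filter fun p => p ∈ closedBall (xc b) (rc b)).card : ℝ) := by ring
  -- combine: #(E \ E') ≤ 2 N C (ρ/δ)^s #E'
  have hmain1 : (((E \ E').card : ℕ) : ℝ) ≤ 2 * N * C * (ρ / δ) ^ s * (E'.card : ℝ) := by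
    calc (((E \ E').card : ℕ) : ℝ)
        ≤ ((U.biUnion (fun b => E.filter fun p => p ∈ closedBall (xc b) (5 * rc b))).card : ℝ) := by
          exact_mod_cast Finset.card_le_card hcov1
      _ ≤ ((∑ b ∈ U, (E.filter fun p => p ∈ closedBall (xc b) (5 * rc b)).card : ℕ) : ℝ) := by
          exact_mod_cast Finset.card_biUnion_le
      _ = ∑ b ∈ U, ((E.filter fun p => p ∈ closedBall (xc b) (5 * rc b)).card : ℝ) := by
          push_cast; ring
      _ ≤ ∑ b ∈ U, 2 * N * C * (ρ / δ) ^ s *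
            ((E'.filter fun p => p ∈ closedBall (xc b) (rc b)).card : ℝ) :=
          Finset.sum_le_sum hper
      _ = 2 * N * C * (ρ / δ) ^ s *
            ∑ b ∈ U, ((E'.filter fun p => p ∈ closedBall (xc b) (rc b)).card : ℝ) := by
          rw [Finset.mul_sum]
      _ ≤ 2 * N * C * (ρ / δ) ^ s * (E'.card : ℝ) := by
          apply mul_le_mul_of_nonneg_left _
            (mul_nonneg (mul_nonneg (mul_nonneg (by norm_num) hNpos.le) hC0) hQ0)
          exact_mod_cast hsum4
  -- total count
  have htotal : (E.card : ℝ) ≤ 3 * N * C * (ρ / δ) ^ s * (E'.card : ℝ) := by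
    have hcardeq : ((E \ E').card : ℝ) + (E'.card : ℝ) = (E.card : ℝ) := by
      exact_mod_cast Finset.card_sdiff_add_card_eq_card hE'sub
    have hCQ : (1:ℝ) ≤ C * (ρ / δ) ^ s := by nlinarith
    have hE'0 : (0:ℝ) ≤ (E'.card : ℝ) := by positivity
    nlinarith [mul_le_mul_of_nonneg_right hCQ hE'0,
      mul_nonneg (sub_nonneg.2 hN1) (mul_nonneg (mul_nonneg hC0 hQ0) hE'0)]
  -- final arithmetic
  have hδs : (0:ℝ) < δ ^ s := Real.rpow_pos_of_pos hδ s
  have hQeq : (ρ / δ) ^ s = ρ ^ s / δ ^ s := Real.div_rpow hρpos.le hδ.le s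
  have h2 : δ ^ s * (E.card : ℝ) ≤ 3 * N * C * (ρ ^ s * (E'.card : ℝ)) := by
    rw [hQeq] at htotal
    calc δ ^ s * (E.card : ℝ) ≤ δ ^ s * (3 * N * C * (ρ ^ s / δ ^ s) * (E'.card : ℝ)) :=
          mul_le_mul_of_nonneg_left htotal hδs.le
      _ = 3 * N * C * (ρ ^ s * (E'.card : ℝ)) * (δ ^ s * (δ ^ s)⁻¹) := by ring
      _ = 3 * N * C * (ρ ^ s * (E'.card : ℝ)) := by
          rw [mul_inv_cancel₀ hδs.ne', mul_one]
  have hδε : (0:ℝ) < δ ^ ε := Real.rpow_pos_of_pos hδ ε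
  have hCε : δ ^ ε * C ≤ 1 := by
    rw [Real.rpow_neg hδ.le] at hCδ
    calc δ ^ ε * C ≤ δ ^ ε * (δ ^ ε)⁻¹ := mul_le_mul_of_nonneg_left hCδ hδε.le
      _ = 1 := mul_inv_cancel₀ hδε.ne'
  have hρsE' : (0:ℝ) ≤ ρ ^ s * (E'.card : ℝ) :=
    mul_nonneg (Real.rpow_nonneg hρpos.le s) (Nat.cast_nonneg _)
  calc 1 / (3 * N) * δ ^ ε * (δ ^ s * (E.card : ℝ))
      ≤ 1 / (3 * N) * δ ^ ε * (3 * N * C * (ρ ^ s * (E'.card : ℝ))) := by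
        apply mul_le_mul_of_nonneg_left h2
          (mul_nonneg (by positivity) hδε.le)
    _ = (δ ^ ε * C) * (ρ ^ s * (E'.card : ℝ)) * (3 * N * (3 * N)⁻¹) := by ring
    _ = (δ ^ ε * C) * (ρ ^ s * (E'.card : ℝ)) := by
        rw [mul_inv_cancel₀ (mul_pos (by norm_num : (0:ℝ) < 3) hNpos).ne', mul_one]
    _ ≤ 1 * (ρ ^ s * (E'.card : ℝ)) := mul_le_mul_of_nonneg_right hCε hρsE'
    _ = ρ ^ s * (E'.card : ℝ) := one_mul _
end
end

section
/- Assume the two-ends hairbrush estimate in ℝ³: for every ε>0 and every (ε₁,ε₂)-two-ends, λ-dense, 1-parallel δ-separated family (L,Y)_δ, |E_L| ≥ c_ε δ^ε δ^{3ε₁/4} λ^{3/4} δ^{1/2} Σ_ℓ |Y(ℓ)|. Then for an m-parallel family (L,Y)_δ with the same shading hypotheses, |E_L| ≳ δ^{7ε₁/8} m^{-1} λ^{3/4} δ^{1/2} Σ_{ℓ∈L}|Y(ℓ)| up to δ^{-ε} losses, by passing to a maximal directionally δ-separated subfamily L' ⊆ L maximizing shading measure in each direction cap, which satisfies Σ_{ℓ∈L'}|Y(ℓ)|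 ≳ m^{-1} Σ_{ℓ∈L}|Y(ℓ)|. -/
open Metric Set MeasureTheory
open scoped Classical

noncomputable section

/-- The line through `a` with direction `d`. -/
def lineSet {n : ℕ} (a d : EuclideanSpace ℝ (Fin n)) : Set (EuclideanSpace ℝ (Fin n)) :=
  {x | ∃ t : ℝ, x = a + t • d}

/-- The `δ`-neighborhood `N_δ(ℓ) ∩ B(0,1)` of the line through `a` with direction `d`. -/
def lineNbhd {n : ℕ} (δ : ℝ) (a d : EuclideanSpace ℝ (Fin n)) :
    Set (EuclideanSpace ℝ (Fin n)) :=
  Metric.thickening δ (lineSet a d) ∩ Metric.ball 0 1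

/-- A `δ × len`-tube segment of `N_δ(ℓ)`, at position `t₀` along the line. -/
def tubeSeg {n : ℕ} (δ len : ℝ) (a d : EuclideanSpace ℝ (Fin n)) (t₀ : ℝ) :
    Set (EuclideanSpace ℝ (Fin n)) :=
  lineNbhd δ a d ∩ {x | (inner ℝ (x - a) d : ℝ) ∈ Set.Icc t₀ (t₀ + len)}

/-- `Y` is an `(ε₁, ε₂, C)`-two-ends shading of the line through `a` with direction `d`:
every `δ × δ^{ε₁}`-tube segment carries at most a `C δ^{ε₂}` fraction of `|Y|`. -/
def TwoEndsShading {n : ℕ} (δ ε₁ ε₂ C : ℝ) (a d : EuclideanSpace ℝ (Fin n))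
    (Y : Set (EuclideanSpace ℝ (Fin n))) : Prop :=
  ∀ t₀ : ℝ, volume (Y ∩ tubeSeg δ (δ ^ ε₁) a d t₀) ≤ ENNReal.ofReal (C * δ ^ ε₂) * volume Y

/-!
Greedily pick a line of maximal shading, discard every line whose direction is within `δ` of
it, and repeat: the chosen lines `L'` are directionally `δ`-separated, and every line of `L` is
dominated (in direction and in shading) by one of them. By `m`-parallelism each line of `L'`
dominates at most `m` lines, so `∑_{L'} |Y| ≥ m⁻¹ ∑_L |Y|`, and the `1`-parallel hairbrush
estimate applied to `L'` gives the `m`-parallel one, the loss `δ^{ε₁/8}` being harmless.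
-/

section SeparatedSubfamily

variable {ι α β : Type*} [PseudoMetricSpace α]

theorem exists_separated_subset_dominating [LinearOrder β] {r : ℝ} (hr : 0 < r)
    (d : ι → α) (w : ι → β) (L : Finset ι) :
    ∃ L' ⊆ L, (∀ i ∈ L', ∀ j ∈ L', i ≠ j → r ≤ dist (d i) (d j)) ∧
      ∀ i ∈ L, ∃ j ∈ L', dist (d i) (d j) ≤ r ∧ w i ≤ w j := by
  induction L using Finset.strongInductionOn with
  | _ L ih =>
    rcases L.eq_empty_or_nonempty with rfl | hne
    · exact ⟨∅, subset_rfl, by simp, by simp⟩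
    obtain ⟨j, hjL, hjmax⟩ := L.exists_max_image w hne
    set far := L.filter fun i => r ≤ dist (d i) (d j)
    have hj_far : j ∉ far := by simp [far, hr.not_ge]
    obtain ⟨L'', hL''_far, hsep, hdom⟩ :=
      ih far ⟨Finset.filter_subset _ _, fun h => hj_far (h hjL)⟩
    have hfar : ∀ i ∈ L'', r ≤ dist (d i) (d j) := fun i hi =>
      (Finset.mem_filter.mp (hL''_far hi)).2
    refine ⟨insert j L'', Finset.insert_subset hjL (hL''_far.trans (Finset.filter_subset _ _)),
      ?_, ?_⟩
    · intro i hi k hk hik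
      rcases Finset.mem_insert.mp hi with rfl | hi'' <;>
        rcases Finset.mem_insert.mp hk with rfl | hk''
      · exact absurd rfl hik
      · exact dist_comm (d k) (d i) ▸ hfar k hk''
      · exact hfar i hi''
      · exact hsep i hi'' k hk'' hik
    · intro i hi
      by_cases h : r ≤ dist (d i) (d j)
      · obtain ⟨k, hk, hik⟩ := hdom i (Finset.mem_filter.mpr ⟨hi, h⟩)
        exact ⟨k, Finset.mem_insert_of_mem hk, hik⟩
      · exact ⟨j, Finset.mem_insert_self _ _, (not_le.mp h).le, hjmax i hi⟩

theorem sum_le_mul_sum_of_dominated {r m : ℝ} (d : ι → α) (w : ι → ENNReal)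
    {L L' : Finset ι} (hdom : ∀ i ∈ L, ∃ j ∈ L', dist (d i) (d j) ≤ r ∧ w i ≤ w j)
    (hcap : ∀ v : α, ((L.filter fun i => dist (d i) v ≤ r).card : ℝ) ≤ m) :
    ∑ i ∈ L, w i ≤ ENNReal.ofReal m * ∑ j ∈ L', w j := by
  choose! f hfL hfd hfw using hdom
  have hfiber : ∀ j, ((L.filter fun i => f i = j).card : ENNReal) ≤ ENNReal.ofReal m := by
    intro j
    have hsub : L.filter (fun i => f i = j) ⊆ L.filter fun i => dist (d i) (d j) ≤ r :=
      Finset.monotone_filter_right _ fun i hi hfi => hfi ▸ hfd i hi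
    rw [← ENNReal.ofReal_natCast]
    exact ENNReal.ofReal_le_ofReal ((Nat.cast_le.mpr (Finset.card_le_card hsub)).trans (hcap _))
  calc ∑ i ∈ L, w i ≤ ∑ i ∈ L, w (f i) := Finset.sum_le_sum hfw
    _ = ∑ j ∈ L', ∑ i ∈ L.filter (fun i => f i = j), w j := by
        rw [← Finset.sum_fiberwise_of_maps_to hfL]
        exact Finset.sum_congr rfl fun j _ => Finset.sum_congr rfl fun i hi =>
          congrArg w (Finset.mem_filter.mp hi).2
    _ ≤ ∑ j ∈ L', ENNReal.ofReal m * w j := by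
        gcongr with j
        rw [Finset.sum_const, nsmul_eq_mul]
        gcongr
        exact hfiber j
    _ = ENNReal.ofReal m * ∑ j ∈ L', w j := (Finset.mul_sum _ _ _).symm

theorem exists_separated_subset_inv_mul_sum_le {r m : ℝ} (hr : 0 < r) (hm : 0 < m)
    (d : ι → α) (w : ι → ENNReal) (L : Finset ι)
    (hcap : ∀ v : α, ((L.filter fun i => dist (d i) v ≤ r).card : ℝ) ≤ m) :
    ∃ L' ⊆ L, (∀ i ∈ L', ∀ j ∈ L', i ≠ j → r ≤ dist (d i) (d j)) ∧
      ENNReal.ofReal m⁻¹ * ∑ i ∈ L, w i ≤ ∑ i ∈ L', w i := by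
  obtain ⟨L', hL', hsep, hdom⟩ := exists_separated_subset_dominating hr d w L
  refine ⟨L', hL', hsep, ?_⟩
  calc ENNReal.ofReal m⁻¹ * ∑ i ∈ L, w i
      ≤ ENNReal.ofReal m⁻¹ * (ENNReal.ofReal m * ∑ j ∈ L', w j) := by
        gcongr
        exact sum_le_mul_sum_of_dominated d w hdom hcap
    _ = ∑ j ∈ L', w j := by
        rw [← mul_assoc, ← ENNReal.ofReal_mul (inv_nonneg.mpr hm.le), inv_mul_cancel₀ hm.ne',
          ENNReal.ofReal_one, one_mul]

end SeparatedSubfamily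

theorem ofReal_mul_mul_sum_le_measure_biUnion_of_subset {ι Ω : Type*} [MeasurableSpace Ω]
    (μ : Measure Ω) {Y : ι → Set Ω} {L L' : Finset ι} (hL' : L' ⊆ L) {K θ : ℝ} (hK : 0 ≤ K)
    (hfrac : ENNReal.ofReal θ * ∑ i ∈ L, μ (Y i) ≤ ∑ i ∈ L', μ (Y i))
    (hest : ENNReal.ofReal K * ∑ i ∈ L', μ (Y i) ≤ μ (⋃ i ∈ L', Y i)) :
    ENNReal.ofReal (K * θ) * ∑ i ∈ L, μ (Y i) ≤ μ (⋃ i ∈ L, Y i) :=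
  calc ENNReal.ofReal (K * θ) * ∑ i ∈ L, μ (Y i)
      = ENNReal.ofReal K * (ENNReal.ofReal θ * ∑ i ∈ L, μ (Y i)) := by
        rw [ENNReal.ofReal_mul hK, mul_assoc]
    _ ≤ ENNReal.ofReal K * ∑ i ∈ L', μ (Y i) := by gcongr
    _ ≤ μ (⋃ i ∈ L', Y i) := hest
    _ ≤ μ (⋃ i ∈ L, Y i) := measure_mono (biUnion_subset_biUnion_left hL')

theorem stmt13_general (C : ℝ)
    (hairbrush : ∀ ε > (0:ℝ), ∃ c > (0:ℝ),
      ∀ (δ ε₁ ε₂ lam : ℝ) (ι : Type) (L : Finset ι)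
        (a d : ι → EuclideanSpace ℝ (Fin 3)) (Y : ι → Set (EuclideanSpace ℝ (Fin 3))),
        δ ∈ Set.Ioo (0:ℝ) 1 → 0 < ε₂ → ε₂ < ε₁ → ε₁ < 1 → 0 < lam → lam ≤ 1 →
        (∀ i, ‖d i‖ = 1) →
        (∀ i ∈ L, Y i ⊆ lineNbhd δ (a i) (d i)) →
        (∀ i ∈ L, ∀ j ∈ L, i ≠ j → δ ≤ dist (d i) (d j)) →
        (∀ i ∈ L, TwoEndsShading δ ε₁ ε₂ C (a i) (d i) (Y i)) →
        (∀ i ∈ L, ENNReal.ofReal lam * volume (lineNbhd δ (a i) (d i)) ≤ volume (Y i)) →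
        ENNReal.ofReal (c * δ ^ ε * δ ^ (3 * ε₁ / 4) * lam ^ ((3:ℝ)/4) * δ ^ ((1:ℝ)/2)) *
            (∑ i ∈ L, volume (Y i))
          ≤ volume (⋃ i ∈ L, Y i)) :
    ∀ ε > (0:ℝ), ∃ c > (0:ℝ),
      ∀ (δ ε₁ ε₂ lam m : ℝ) (ι : Type) (L : Finset ι)
        (a d : ι → EuclideanSpace ℝ (Fin 3)) (Y : ι → Set (EuclideanSpace ℝ (Fin 3))),
        δ ∈ Set.Ioo (0:ℝ) 1 → 0 < ε₂ → ε₂ < ε₁ → ε₁ < 1 → 0 < lam → lam ≤ 1 → 1 ≤ m →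
        (∀ i, ‖d i‖ = 1) →
        (∀ i ∈ L, Y i ⊆ lineNbhd δ (a i) (d i)) →
        -- `L` is `δ`-separated
        (∀ i ∈ L, ∀ j ∈ L, i ≠ j → δ ≤ dist (a i) (a j) + dist (d i) (d j)) →
        -- `L` is `m`-parallel
        (∀ v : EuclideanSpace ℝ (Fin 3),
          ((L.filter fun i => dist (d i) v ≤ δ).card : ℝ) ≤ m) →
        (∀ i ∈ L, TwoEndsShading δ ε₁ ε₂ C (a i) (d i) (Y i)) →
        (∀ i ∈ L, ENNReal.ofReal lam * volume (lineNbhd δ (a i) (d i)) ≤ volume (Y i)) →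
        -- the directionally separated subfamily carrying an `m⁻¹` fraction of the shading
        (∃ L' ⊆ L, (∀ i ∈ L', ∀ j ∈ L', i ≠ j → δ ≤ dist (d i) (d j)) ∧
          ENNReal.ofReal (c * m⁻¹) * (∑ i ∈ L, volume (Y i))
            ≤ ∑ i ∈ L', volume (Y i)) ∧
        -- the resulting `m`-parallel two-ends hairbrush estimate
        ENNReal.ofReal (c * δ ^ ε * δ ^ (7 * ε₁ / 8) * m⁻¹ * lam ^ ((3:ℝ)/4) * δ ^ ((1:ℝ)/2)) *
            (∑ i ∈ L, volume (Y i))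
          ≤ volume (⋃ i ∈ L, Y i) := by
  intro ε hε
  obtain ⟨c, hc, hairbrush⟩ := hairbrush ε hε
  refine ⟨min c 1, lt_min hc one_pos, ?_⟩
  intro δ ε₁ ε₂ lam m ι L a d Y hδ hε₂ hε₁₂ hε₁ hlam hlam1 hm hd hY _ hcap htwo hdense
  have hδ0 : 0 < δ := hδ.1
  have hm0 : 0 < m := one_pos.trans_le hm
  obtain ⟨L', hL', hsep, hfrac⟩ :=
    exists_separated_subset_inv_mul_sum_le hδ0 hm0 d (fun i => volume (Y i)) L hcap
  refine ⟨⟨L', hL', hsep, le_trans ?_ hfrac⟩, ?_⟩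
  · gcongr
    exact mul_le_of_le_one_left (by positivity) (min_le_right c 1)
  · calc _ ≤ ENNReal.ofReal
            ((c * δ ^ ε * δ ^ (3 * ε₁ / 4) * lam ^ ((3:ℝ)/4) * δ ^ ((1:ℝ)/2)) * m⁻¹) *
            ∑ i ∈ L, volume (Y i) := by
          have hδ_pow : δ ^ (7 * ε₁ / 8) ≤ δ ^ (3 * ε₁ / 4) :=
            Real.rpow_le_rpow_of_exponent_ge hδ0 hδ.2.le (by linarith)
          have hc' : min c 1 ≤ c := min_le_left c 1
          rw [mul_right_comm _ m⁻¹, mul_right_comm _ m⁻¹]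
          gcongr
      _ ≤ volume (⋃ i ∈ L, Y i) := ofReal_mul_mul_sum_le_measure_biUnion_of_subset volume hL'
            (by positivity) hfrac <| hairbrush δ ε₁ ε₂ lam ι L' a d Y hδ hε₂ hε₁₂ hε₁ hlam hlam1
              hd (fun i hi => hY i (hL' hi)) hsep (fun i hi => htwo i (hL' hi))
              (fun i hi => hdense i (hL' hi))

/-- Assuming the two-ends hairbrush estimate in `ℝ³` for `1`-parallel families, the same
estimate holds for `m`-parallel families with an extra factor `m⁻¹` (and `δ^{7ε₁/8}`), via a
directionally separated subfamily `L'` carrying at least an `m⁻¹` fraction of the shading. -/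
theorem stmt13 (C : ℝ) (hC : 1 ≤ C)
    (hairbrush : ∀ ε > (0:ℝ), ∃ c > (0:ℝ),
      ∀ (δ ε₁ ε₂ lam : ℝ) (ι : Type) (L : Finset ι)
        (a d : ι → EuclideanSpace ℝ (Fin 3)) (Y : ι → Set (EuclideanSpace ℝ (Fin 3))),
        δ ∈ Set.Ioo (0:ℝ) 1 → 0 < ε₂ → ε₂ < ε₁ → ε₁ < 1 → 0 < lam → lam ≤ 1 →
        (∀ i, ‖d i‖ = 1) →
        (∀ i ∈ L, Y i ⊆ lineNbhd δ (a i) (d i)) →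
        (∀ i ∈ L, ∀ j ∈ L, i ≠ j → δ ≤ dist (d i) (d j)) →
        (∀ i ∈ L, TwoEndsShading δ ε₁ ε₂ C (a i) (d i) (Y i)) →
        (∀ i ∈ L, ENNReal.ofReal lam * volume (lineNbhd δ (a i) (d i)) ≤ volume (Y i)) →
        ENNReal.ofReal (c * δ ^ ε * δ ^ (3 * ε₁ / 4) * lam ^ ((3:ℝ)/4) * δ ^ ((1:ℝ)/2)) *
            (∑ i ∈ L, volume (Y i))
          ≤ volume (⋃ i ∈ L, Y i)) :
    ∀ ε > (0:ℝ), ∃ c > (0:ℝ),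
      ∀ (δ ε₁ ε₂ lam m : ℝ) (ι : Type) (L : Finset ι)
        (a d : ι → EuclideanSpace ℝ (Fin 3)) (Y : ι → Set (EuclideanSpace ℝ (Fin 3))),
        δ ∈ Set.Ioo (0:ℝ) 1 → 0 < ε₂ → ε₂ < ε₁ → ε₁ < 1 → 0 < lam → lam ≤ 1 → 1 ≤ m →
        (∀ i, ‖d i‖ = 1) →
        (∀ i ∈ L, Y i ⊆ lineNbhd δ (a i) (d i)) →
        -- `L` is `δ`-separated
        (∀ i ∈ L, ∀ j ∈ L, i ≠ j → δ ≤ dist (a i) (a j) + dist (d i) (d j)) →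
        -- `L` is `m`-parallel
        (∀ v : EuclideanSpace ℝ (Fin 3),
          ((L.filter fun i => dist (d i) v ≤ δ).card : ℝ) ≤ m) →
        (∀ i ∈ L, TwoEndsShading δ ε₁ ε₂ C (a i) (d i) (Y i)) →
        (∀ i ∈ L, ENNReal.ofReal lam * volume (lineNbhd δ (a i) (d i)) ≤ volume (Y i)) →
        -- the directionally separated subfamily carrying an `m⁻¹` fraction of the shading
        (∃ L' ⊆ L, (∀ i ∈ L', ∀ j ∈ L', i ≠ j → δ ≤ dist (d i) (d j)) ∧
          ENNReal.ofReal (c * m⁻¹) * (∑ i ∈ L, volume (Y i))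
            ≤ ∑ i ∈ L', volume (Y i)) ∧
        -- the resulting `m`-parallel two-ends hairbrush estimate
        ENNReal.ofReal (c * δ ^ ε * δ ^ (7 * ε₁ / 8) * m⁻¹ * lam ^ ((3:ℝ)/4) * δ ^ ((1:ℝ)/2)) *
            (∑ i ∈ L, volume (Y i))
          ≤ volume (⋃ i ∈ L, Y i) :=
  stmt13_general C hairbrush
end
end

section
/- Let N ≥ 1 and k₁,…,k_{n−1} ≥ 1 be integers. Let 𝒫 = ([0,N]×[0,k₁N]×⋯×[0,k_{n−1}N]) ∩ ℤⁿ and let ℒ be the set of lines ℓ_{a,b}: t ↦ (t, a₁+tb₁, …, a_{n−1}+tb_{n−1}) with a ∈ ([1,k₁N]×⋯×[1,k_{n−1}N])∩ℤ^{n−1} and b ∈ ([1,k₁]×⋯×[1,k_{n−1}])∩ℤ^{n−1}. Then #𝒫 ∼ Nⁿ∏k_j, #ℒ = N^{n−1}∏k_j², the number of incidences I(𝒫,ℒ) = #{(p,ℓ) : p∈𝒫, ℓ∈ℒ, p∈ℓ} satisfies I(𝒫,ℒ) ∼ Nⁿ∏k_j², and consequently I(𝒫,ℒ) ∼ (#𝒫)^{2/(n+1)}(#ℒ)^{n/(n+1)}.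 -/
/-
A point `(t, y)` of the grid lies on `ℓ_{a,b}` iff `y = a + t b`, so `ℓ_{a,b}` meets the grid
once for each `t ∈ [0, N]` with `a_j + t b_j ∈ [0, k_j N]` for all `j`. Exchanging the sum over
lines with the sum over `t`, the incidence count factorises as `I = ∑_t ∏_j h_j(t)`, where `h_j(t)`
counts the pairs `(a_j, b_j) ∈ [1, k_j N] × [1, k_j]` with `a_j + t b_j ≤ k_j N`. Clearly
`h_j(t) ≤ k_j² N`, and for `t ≤ N / 2` every `a_j ≤ k_j (N - t)` qualifies, so
`h_j(t) ≥ k_j² N / 2`; hence `I ≍ N^{n+1} ∏ k_j²`. The last estimate follows from the identity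
`(N^{n+1} ∏ k_j²)^{n+2} = (N^{n+1} ∏ k_j)² (N^n ∏ k_j²)^{n+1}`.
-/

noncomputable section

open Finset

open Fintype (piFinset)

theorem Int.card_Icc_zero_natCast (m : ℕ) : #(Icc (0 : ℤ) m) = m + 1 := by
  rw [Int.card_Icc]; omega

theorem Int.card_Icc_one_natCast (m : ℕ) : #(Icc (1 : ℤ) m) = m := by
  rw [Int.card_Icc]; omega

theorem card_filter_product_snd_eq {α β : Type*} [DecidableEq β] (s : Finset α) (t : Finset β)
    (f : α → β) :
    #{p ∈ s ×ˢ t | p.2 = f p.1} = #{a ∈ s | f a ∈ t} := by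
  refine card_nbij' Prod.fst (fun a => (a, f a)) ?_ ?_ ?_ ?_
  · rintro ⟨a, b⟩ h
    simp only [coe_filter, mem_product, Set.mem_ofPred_eq] at h ⊢
    exact ⟨h.1.1, h.2 ▸ h.1.2⟩
  · intro a h
    simp_all
  · rintro ⟨a, b⟩ h
    simp_all
  · intro a _
    rfl

section

variable {ι : Type*} [Fintype ι] [DecidableEq ι]

theorem card_filter_piFinset_forall {α : ι → Type*} (A : ∀ i, Finset (α i))
    (p : ∀ i, α i → Prop) [∀ i, DecidablePred (p i)] :
    #{x ∈ piFinset A | ∀ i, p i (x i)} = ∏ i, #{a ∈ A i | p i a} := by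
  rw [← Fintype.card_piFinset]
  congr 1
  ext x
  simp only [mem_filter, Fintype.mem_piFinset, forall_and]

theorem card_filter_piFinset_product_forall {α β : Type*} (A : ι → Finset α)
    (B : ι → Finset β) (r : ι → α → β → Prop) [∀ i a b, Decidable (r i a b)] :
    #{ab ∈ piFinset A ×ˢ piFinset B | ∀ i, r i (ab.1 i) (ab.2 i)} =
      ∏ i, #{q ∈ A i ×ˢ B i | r i q.1 q.2} := by
  rw [← card_filter_piFinset_forall (fun i => A i ×ˢ B i) (fun i q => r i q.1 q.2)]
  refine card_nbij' (fun ab i => (ab.1 i, ab.2 i)) (fun x => (fun i => (x i).1, fun i => (x i).2))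
    ?_ ?_ ?_ ?_ <;> intro x hx <;>
    simp_all [coe_filter, mem_product, Fintype.mem_piFinset, forall_and]

theorem card_filter_product_piFinset_graph {α β : Type*} [DecidableEq β] (T : Finset α)
    (S : ι → Finset β) (f : α → ι → β) :
    #{p ∈ T ×ˢ piFinset S | ∀ i, p.2 i = f p.1 i} = #{t ∈ T | ∀ i, f t i ∈ S i} := by
  convert card_filter_product_snd_eq T (piFinset S) f using 2 <;> ext <;>
    simp only [mem_filter, Fintype.mem_piFinset, funext_iff]

theorem card_grid_eq (N : ℕ) (k : ι → ℕ) :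
    #(Icc (0 : ℤ) N ×ˢ piFinset fun i => Icc (0 : ℤ) ((k i : ℤ) * N)) =
      (N + 1) * ∏ i, (k i * N + 1) := by
  simp only [card_product, Fintype.card_piFinset, ← Nat.cast_mul, Int.card_Icc_zero_natCast]

theorem card_lines_eq (N : ℕ) (k : ι → ℕ) :
    #((piFinset fun i => Icc (1 : ℤ) ((k i : ℤ) * N)) ×ˢ
      piFinset fun i => Icc (1 : ℤ) (k i)) = N ^ Fintype.card ι * ∏ i, k i ^ 2 := by
  simp only [card_product, Fintype.card_piFinset, ← Nat.cast_mul, Int.card_Icc_one_natCast,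
    prod_mul_distrib, prod_const, card_univ, prod_pow]
  ring

end

theorem prod_add_one_le_two_pow_mul_prod {κ : Type*} {s : Finset κ} {a : κ → ℕ}
    (ha : ∀ i ∈ s, 1 ≤ a i) : ∏ i ∈ s, (a i + 1) ≤ 2 ^ #s * ∏ i ∈ s, a i := by
  rw [← prod_const, ← prod_mul_distrib]
  exact prod_le_prod' fun i hi => by linarith [ha i hi]

def hitCount (M m : ℕ) (t : ℤ) : ℕ :=
  #{q ∈ Icc (1 : ℤ) M ×ˢ Icc (1 : ℤ) m | q.1 + t * q.2 ∈ Icc (0 : ℤ) M}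

theorem hitCount_le (M m : ℕ) (t : ℤ) : hitCount M m t ≤ M * m :=
  (card_filter_le _ _).trans <| by
    rw [card_product, Int.card_Icc_one_natCast, Int.card_Icc_one_natCast]

theorem mul_sub_le_hitCount (M m : ℕ) {t : ℤ} (ht : 0 ≤ t) :
    (m : ℤ) * (M - t * m) ≤ hitCount M m t := by
  have hsub : Icc (1 : ℤ) (M - t * m) ×ˢ Icc (1 : ℤ) m ⊆
      {q ∈ Icc (1 : ℤ) M ×ˢ Icc (1 : ℤ) m | q.1 + t * q.2 ∈ Icc (0 : ℤ) M} := by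
    rintro ⟨x, y⟩ h
    simp only [mem_product, mem_Icc, mem_filter] at h ⊢
    have : t * y ≤ t * m := mul_le_mul_of_nonneg_left h.2.2 ht
    have : 0 ≤ t * y := mul_nonneg ht (by omega)
    omega
  have hcard : ((M - t * m).toNat * m : ℕ) ≤ (hitCount M m t : ℤ) := by
    have := card_le_card hsub
    rw [card_product, Int.card_Icc, add_sub_cancel_right, Int.card_Icc_one_natCast] at this
    exact_mod_cast this
  push_cast at hcard
  nlinarith [Int.self_le_toNat (M - t * m)]

theorem sq_mul_le_two_mul_hitCount (k N : ℕ) {t : ℤ} (ht : 0 ≤ t) (htN : 2 * t ≤ N) :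
    k ^ 2 * N ≤ 2 * hitCount (k * N) k t := by
  have h := mul_sub_le_hitCount (k * N) k ht
  push_cast at h
  have : 0 ≤ (k : ℤ) ^ 2 * (N - 2 * t) := mul_nonneg (sq_nonneg _) (by omega)
  zify
  nlinarith

section

variable {ι : Type*} [Fintype ι]

theorem pow_succ_mul_prod_le_mul_prod_add_one (N : ℕ) (k : ι → ℕ) :
    N ^ (Fintype.card ι + 1) * ∏ i, k i ≤ (N + 1) * ∏ i, (k i * N + 1) := by
  rw [pow_succ, mul_comm _ N, mul_assoc, ← card_univ, ← prod_const, ← prod_mul_distrib]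
  exact Nat.mul_le_mul (Nat.le_succ N) (prod_le_prod' fun i _ => by rw [mul_comm]; omega)

theorem mul_prod_add_one_le (N : ℕ) (hN : 1 ≤ N) (k : ι → ℕ) (hk : ∀ i, 1 ≤ k i) :
    (N + 1) * ∏ i, (k i * N + 1) ≤
      2 ^ (Fintype.card ι + 1) * (N ^ (Fintype.card ι + 1) * ∏ i, k i) := by
  have hprod := prod_add_one_le_two_pow_mul_prod (s := univ) (a := fun i => k i * N)
    fun i _ => Nat.one_le_iff_ne_zero.2 (Nat.mul_ne_zero (by have := hk i; omega) (by omega))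
  rw [prod_mul_distrib, prod_const, card_univ] at hprod
  calc (N + 1) * ∏ i, (k i * N + 1)
      ≤ (2 * N) * (2 ^ Fintype.card ι * ((∏ i, k i) * N ^ Fintype.card ι)) :=
        Nat.mul_le_mul (by omega) hprod
    _ = _ := by ring

theorem card_grid_bounds [DecidableEq ι] (N : ℕ) (hN : 1 ≤ N) (k : ι → ℕ) (hk : ∀ i, 1 ≤ k i) :
    (N : ℝ) ^ (Fintype.card ι + 1) * ∏ i, (k i : ℝ) ≤
        #(Icc (0 : ℤ) N ×ˢ piFinset fun i => Icc (0 : ℤ) ((k i : ℤ) * N)) ∧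
      (#(Icc (0 : ℤ) N ×ˢ piFinset fun i => Icc (0 : ℤ) ((k i : ℤ) * N)) : ℝ) ≤
        2 ^ (Fintype.card ι + 1) * ((N : ℝ) ^ (Fintype.card ι + 1) * ∏ i, (k i : ℝ)) := by
  rw [card_grid_eq]
  constructor
  · exact_mod_cast pow_succ_mul_prod_le_mul_prod_add_one N k
  · exact_mod_cast mul_prod_add_one_le N hN k hk

theorem sum_prod_hitCount_le (N : ℕ) (hN : 1 ≤ N) (k : ι → ℕ) :
    ∑ t ∈ Icc (0 : ℤ) N, ∏ i, hitCount (k i * N) (k i) t ≤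
      2 * (N ^ (Fintype.card ι + 1) * ∏ i, k i ^ 2) := by
  calc ∑ t ∈ Icc (0 : ℤ) N, ∏ i, hitCount (k i * N) (k i) t
      ≤ ∑ _t ∈ Icc (0 : ℤ) N, ∏ i, k i ^ 2 * N :=
        sum_le_sum fun t _ => prod_le_prod' fun i _ =>
          (hitCount_le _ _ t).trans_eq (by ring)
    _ = (N + 1) * (N ^ Fintype.card ι * ∏ i, k i ^ 2) := by
        rw [sum_const, Int.card_Icc_zero_natCast, smul_eq_mul, prod_mul_distrib, prod_const,
          card_univ, mul_comm (∏ i, k i ^ 2)]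
    _ ≤ 2 * N * (N ^ Fintype.card ι * ∏ i, k i ^ 2) := Nat.mul_le_mul_right _ (by omega)
    _ = 2 * (N ^ (Fintype.card ι + 1) * ∏ i, k i ^ 2) := by ring

theorem pow_succ_mul_prod_sq_le_sum_prod_hitCount (N : ℕ) (k : ι → ℕ) :
    N ^ (Fintype.card ι + 1) * ∏ i, k i ^ 2 ≤
      2 ^ (Fintype.card ι + 1) * ∑ t ∈ Icc (0 : ℤ) N, ∏ i, hitCount (k i * N) (k i) t := by
  have hhalf : ∀ t ∈ Icc (0 : ℤ) (N / 2 : ℕ), N ^ Fintype.card ι * ∏ i, k i ^ 2 ≤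
      2 ^ Fintype.card ι * ∏ i, hitCount (k i * N) (k i) t := by
    intro t ht
    rw [mem_Icc] at ht
    rw [← card_univ, ← prod_const, ← prod_mul_distrib, ← prod_const, ← prod_mul_distrib]
    exact prod_le_prod' fun i _ =>
      (mul_comm _ _).trans_le (sq_mul_le_two_mul_hitCount (k i) N ht.1 (by omega))
  calc N ^ (Fintype.card ι + 1) * ∏ i, k i ^ 2
      ≤ 2 * (N / 2 + 1) * (N ^ Fintype.card ι * ∏ i, k i ^ 2) := by
        rw [pow_succ, mul_assoc, mul_left_comm]
        exact Nat.mul_le_mul_right _ (by omega)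
    _ = 2 * ∑ _t ∈ Icc (0 : ℤ) (N / 2 : ℕ), N ^ Fintype.card ι * ∏ i, k i ^ 2 := by
        rw [sum_const, Int.card_Icc_zero_natCast, smul_eq_mul, mul_assoc]
    _ ≤ 2 * ∑ t ∈ Icc (0 : ℤ) (N / 2 : ℕ), 2 ^ Fintype.card ι * ∏ i, hitCount (k i * N) (k i) t :=
        Nat.mul_le_mul_left _ (sum_le_sum hhalf)
    _ ≤ 2 * ∑ t ∈ Icc (0 : ℤ) N, 2 ^ Fintype.card ι * ∏ i, hitCount (k i * N) (k i) t :=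
        Nat.mul_le_mul_left _ <| sum_le_sum_of_subset <|
          Icc_subset_Icc le_rfl (by exact_mod_cast Nat.div_le_self N 2)
    _ = 2 ^ (Fintype.card ι + 1) * ∑ t ∈ Icc (0 : ℤ) N, ∏ i, hitCount (k i * N) (k i) t := by
        rw [← mul_sum, pow_succ, mul_comm (2 ^ Fintype.card ι) 2, mul_assoc]

theorem sum_prod_hitCount_bounds (N : ℕ) (hN : 1 ≤ N) (k : ι → ℕ) :
    (N : ℝ) ^ (Fintype.card ι + 1) * ∏ i, (k i : ℝ) ^ 2 ≤ 2 ^ (Fintype.card ι + 1) *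
        ((∑ t ∈ Icc (0 : ℤ) N, ∏ i, hitCount (k i * N) (k i) t : ℕ) : ℝ) ∧
      ((∑ t ∈ Icc (0 : ℤ) N, ∏ i, hitCount (k i * N) (k i) t : ℕ) : ℝ) ≤
        2 * ((N : ℝ) ^ (Fintype.card ι + 1) * ∏ i, (k i : ℝ) ^ 2) := by
  constructor
  · exact_mod_cast pow_succ_mul_prod_sq_le_sum_prod_hitCount N k
  · exact_mod_cast sum_prod_hitCount_le N hN k

theorem sum_card_incidences_eq [DecidableEq ι] (N : ℕ) (k : ι → ℕ) :
    ∑ ab ∈ (piFinset fun i => Icc (1 : ℤ) ((k i : ℤ) * N)) ×ˢ (piFinset fun i => Icc (1 : ℤ) (k i)),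
      #{p ∈ Icc (0 : ℤ) N ×ˢ (piFinset fun i => Icc (0 : ℤ) ((k i : ℤ) * N)) |
        ∀ i, p.2 i = ab.1 i + p.1 * ab.2 i} =
      ∑ t ∈ Icc (0 : ℤ) N, ∏ i, hitCount (k i * N) (k i) t := by
  rw [sum_congr rfl fun (ab : (ι → ℤ) × (ι → ℤ)) _ =>
    card_filter_product_piFinset_graph _ _ fun t i => ab.1 i + t * ab.2 i]
  have hswap := sum_card_bipartiteAbove_eq_sum_card_bipartiteBelow
    (s := (piFinset fun i => Icc (1 : ℤ) ((k i : ℤ) * N)) ×ˢ piFinset fun i => Icc (1 : ℤ) (k i))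
    (t := Icc (0 : ℤ) N) (r := fun ab t => ∀ i, ab.1 i + t * ab.2 i ∈ Icc (0 : ℤ) ((k i : ℤ) * N))
  simp only [bipartiteAbove, bipartiteBelow] at hswap
  rw [hswap]
  refine sum_congr rfl fun t _ => ?_
  rw [card_filter_piFinset_product_forall _ _
    fun i x y => x + t * y ∈ Icc (0 : ℤ) ((k i : ℤ) * N)]
  simp only [hitCount, Nat.cast_mul]

end

section

variable {n : ℕ} {A X Y Z : ℝ}

theorem rpow_two_div_mul_rpow_pow (hA : 0 ≤ A) (hY : 0 ≤ Y) :
    (A ^ ((2 : ℝ) / ((n : ℝ) + 2)) * Y ^ (((n : ℝ) + 1) / ((n : ℝ) + 2))) ^ (n + 2) =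
      A ^ 2 * Y ^ (n + 1) := by
  have h2 : (2 : ℝ) / ((n : ℝ) + 2) * ((n + 2 : ℕ) : ℝ) = (2 : ℕ) := by push_cast; field_simp
  have h1 : ((n : ℝ) + 1) / ((n : ℝ) + 2) * ((n + 2 : ℕ) : ℝ) = (n + 1 : ℕ) := by
    push_cast; field_simp
  rw [mul_pow, ← Real.rpow_mul_natCast hA, ← Real.rpow_mul_natCast hY, h2, h1,
    Real.rpow_natCast, Real.rpow_natCast]

theorem le_rpow_two_div_mul_rpow (hA : 0 ≤ A) (hY : 0 ≤ Y) (hX : 0 ≤ X)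
    (hZ : Z ^ (n + 2) = X ^ 2 * Y ^ (n + 1)) (hXA : X ≤ A) :
    Z ≤ A ^ ((2 : ℝ) / ((n : ℝ) + 2)) * Y ^ (((n : ℝ) + 1) / ((n : ℝ) + 2)) := by
  refine le_of_pow_le_pow_left₀ (n := n + 2) (by omega) (by positivity) ?_
  rw [rpow_two_div_mul_rpow_pow hA hY, hZ]
  gcongr

theorem rpow_two_div_mul_rpow_le (hA : 0 ≤ A) (hY : 0 ≤ Y) (hZ₀ : 0 ≤ Z)
    (hZ : Z ^ (n + 2) = X ^ 2 * Y ^ (n + 1)) (hAX : A ≤ 2 ^ (n + 1) * X) :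
    A ^ ((2 : ℝ) / ((n : ℝ) + 2)) * Y ^ (((n : ℝ) + 1) / ((n : ℝ) + 2)) ≤ 4 * Z := by
  refine le_of_pow_le_pow_left₀ (n := n + 2) (by omega) (by positivity) ?_
  rw [rpow_two_div_mul_rpow_pow hA hY]
  calc A ^ 2 * Y ^ (n + 1) ≤ (2 ^ (n + 1) * X) ^ 2 * Y ^ (n + 1) := by gcongr
    _ = 4 ^ (n + 1) * Z ^ (n + 2) := by rw [hZ, show (4 : ℝ) = 2 ^ 2 by norm_num, ← pow_mul]; ring
    _ ≤ 4 ^ (n + 2) * Z ^ (n + 2) := by gcongr <;> norm_num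
    _ = (4 * Z) ^ (n + 2) := by ring

end

theorem stmt15_general (n : ℕ) :
    ∃ c C : ℝ, 0 < c ∧ 0 < C ∧
      ∀ (N : ℕ) (k : Fin n → ℕ), 1 ≤ N → (∀ j, 1 ≤ k j) →
        let P : Finset (ℤ × (Fin n → ℤ)) :=
          (Finset.Icc (0:ℤ) (N:ℤ)) ×ˢ
            (Fintype.piFinset fun j => Finset.Icc (0:ℤ) ((k j : ℤ) * (N:ℤ)));
        let Lset : Finset ((Fin n → ℤ) × (Fin n → ℤ)) :=
          (Fintype.piFinset fun j => Finset.Icc (1:ℤ) ((k j : ℤ) * (N:ℤ))) ×ˢ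
            (Fintype.piFinset fun j => Finset.Icc (1:ℤ) ((k j : ℤ)));
        let I : ℕ := ∑ ab ∈ Lset,
          (P.filter fun p => ∀ j, p.2 j = ab.1 j + p.1 * ab.2 j).card;
        (c * (N:ℝ) ^ (n+1) * ∏ j, (k j : ℝ) ≤ (P.card : ℝ) ∧
          (P.card : ℝ) ≤ C * (N:ℝ) ^ (n+1) * ∏ j, (k j : ℝ)) ∧
        (Lset.card : ℝ) = (N:ℝ) ^ n * ∏ j, (k j : ℝ) ^ 2 ∧
        (c * (N:ℝ) ^ (n+1) * ∏ j, (k j : ℝ) ^ 2 ≤ (I : ℝ) ∧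
          (I : ℝ) ≤ C * (N:ℝ) ^ (n+1) * ∏ j, (k j : ℝ) ^ 2) ∧
        (c * (P.card : ℝ) ^ ((2:ℝ)/((n:ℝ)+2)) * (Lset.card : ℝ) ^ (((n:ℝ)+1)/((n:ℝ)+2))
            ≤ (I : ℝ) ∧
          (I : ℝ) ≤ C * (P.card : ℝ) ^ ((2:ℝ)/((n:ℝ)+2)) *
            (Lset.card : ℝ) ^ (((n:ℝ)+1)/((n:ℝ)+2))) := by
  refine ⟨(4 * 2 ^ (n + 1))⁻¹, 4 * 2 ^ (n + 1), by positivity, by positivity, ?_⟩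
  intro N k hN hk P Lset I
  -- the two filters differ only in the instance deciding `∀ j : Fin n, _`
  have hI : I = ∑ t ∈ Icc (0 : ℤ) N, ∏ i, hitCount (k i * N) (k i) t := by
    convert sum_card_incidences_eq N k using 4
  obtain ⟨hP₁, hP₂⟩ : _ ≤ (#P : ℝ) ∧ (#P : ℝ) ≤ _ := card_grid_bounds N hN k hk
  obtain ⟨hI₁, hI₂⟩ := sum_prod_hitCount_bounds N hN k
  rw [← hI] at hI₁ hI₂
  simp only [Fintype.card_fin] at hP₁ hP₂ hI₁ hI₂
  have hL : (#Lset : ℝ) = (N : ℝ) ^ n * ∏ j, (k j : ℝ) ^ 2 := by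
    rw [show #Lset = _ from card_lines_eq N k, Fintype.card_fin]
    push_cast; rfl
  have hZ : ((N : ℝ) ^ (n + 1) * ∏ j, (k j : ℝ) ^ 2) ^ (n + 2) =
      ((N : ℝ) ^ (n + 1) * ∏ j, (k j : ℝ)) ^ 2 * (#Lset : ℝ) ^ (n + 1) := by
    rw [hL, prod_pow]; ring
  have hX : 0 ≤ (N : ℝ) ^ (n + 1) * ∏ j, (k j : ℝ) := by positivity
  have hZ₀ : 0 ≤ (N : ℝ) ^ (n + 1) * ∏ j, (k j : ℝ) ^ 2 := by positivity
  have hE₁ := le_rpow_two_div_mul_rpow (Nat.cast_nonneg #P) (Nat.cast_nonneg #Lset) hX hZ hP₁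
  have hE₂ := rpow_two_div_mul_rpow_le (Nat.cast_nonneg #P) (Nat.cast_nonneg #Lset) hZ₀ hZ hP₂
  have hu : (1 : ℝ) ≤ 2 ^ (n + 1) := one_le_pow₀ (by norm_num)
  have hI₀ : (0 : ℝ) ≤ I := Nat.cast_nonneg I
  refine ⟨⟨?_, ?_⟩, hL, ⟨?_, ?_⟩, ?_, ?_⟩ <;>
    first | rw [mul_assoc, inv_mul_le_iff₀ (by positivity)] | rw [mul_assoc]
  all_goals nlinarith

/-- The lattice points/lines incidence example in `ℝ^{n+1}`: the grid
`𝒫 = [0,N]×[0,k₁N]×⋯×[0,k_nN]` and the lines `t ↦ (t, a + t b)` with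
`a ∈ [1,k₁N]×⋯×[1,k_nN]`, `b ∈ [1,k₁]×⋯×[1,k_n]` satisfy
`#𝒫 ∼ N^{n+1}∏k_j`, `#ℒ = N^n ∏k_j²`, `I(𝒫,ℒ) ∼ N^{n+1}∏k_j²`, and consequently
`I(𝒫,ℒ) ∼ (#𝒫)^{2/(n+2)} (#ℒ)^{(n+1)/(n+2)}`. -/
theorem stmt15 (n : ℕ) (hn : 1 ≤ n) :
    ∃ c C : ℝ, 0 < c ∧ 0 < C ∧
      ∀ (N : ℕ) (k : Fin n → ℕ), 1 ≤ N → (∀ j, 1 ≤ k j) →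
        let P : Finset (ℤ × (Fin n → ℤ)) :=
          (Finset.Icc (0:ℤ) (N:ℤ)) ×ˢ
            (Fintype.piFinset fun j => Finset.Icc (0:ℤ) ((k j : ℤ) * (N:ℤ)));
        let Lset : Finset ((Fin n → ℤ) × (Fin n → ℤ)) :=
          (Fintype.piFinset fun j => Finset.Icc (1:ℤ) ((k j : ℤ) * (N:ℤ))) ×ˢ
            (Fintype.piFinset fun j => Finset.Icc (1:ℤ) ((k j : ℤ)));
        let I : ℕ := ∑ ab ∈ Lset,
          (P.filter fun p => ∀ j, p.2 j = ab.1 j + p.1 * ab.2 j).card;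
        (c * (N:ℝ) ^ (n+1) * ∏ j, (k j : ℝ) ≤ (P.card : ℝ) ∧
          (P.card : ℝ) ≤ C * (N:ℝ) ^ (n+1) * ∏ j, (k j : ℝ)) ∧
        (Lset.card : ℝ) = (N:ℝ) ^ n * ∏ j, (k j : ℝ) ^ 2 ∧
        (c * (N:ℝ) ^ (n+1) * ∏ j, (k j : ℝ) ^ 2 ≤ (I : ℝ) ∧
          (I : ℝ) ≤ C * (N:ℝ) ^ (n+1) * ∏ j, (k j : ℝ) ^ 2) ∧
        (c * (P.card : ℝ) ^ ((2:ℝ)/((n:ℝ)+2)) * (Lset.card : ℝ) ^ (((n:ℝ)+1)/((n:ℝ)+2))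
            ≤ (I : ℝ) ∧
          (I : ℝ) ≤ C * (P.card : ℝ) ^ ((2:ℝ)/((n:ℝ)+2)) *
            (Lset.card : ℝ) ^ (((n:ℝ)+1)/((n:ℝ)+2))) :=
  stmt15_general n
end
end
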